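/- Fix c ∈ ℂ. Suppose S(x), S̃(x) ∈ M(r,d) both satisfy the normal form conditions at c: in block notation, u(c) = ν, T(c) = τ, and the first row of the coefficient of (x−c)¹ in the expansion of T(x) in powers of (x−c) is zero. If g(x) ∈ G_r satisfies g(x)⁻¹S(x)g(x) = S̃(x), then g(x) = I_r (and hence S(x) = S̃(x)). -/

import Mathlib

/-!
Write `S g = g S'` in blocks, with `g = [[1, ᵗβ(x)], [0, B]]` and `B` constant. At `x = c` the
lower blocks give `Bν = ν` and `ν ᵗβ(c) + τB = Bτ`. Below its first row, the second relation makes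
`B` constant along diagonals, with last column zero above the corner; together with the first column
`ν` this forces `B = I`, and the first row then gives `β(c) = 0`. With `B = I`
the first row of the lower right block reads `u₀ ᵗβ + T₀ = T'₀`; differentiating at `c`, where
`u₀(c) = 1` and both `T₀'(c)` and `T'₀'(c)` vanish, gives `β'(c) = 0`. As `deg β ≤ 1`, `β = 0`.
-/

open Polynomial Matrix

noncomputable section

/-- The space `M(r,d)` of polynomial matrices, with `r = n+2`. -/
def Mrd (n d : ℕ) (A : Matrix (Fin (n+2)) (Fin (n+2)) (Polynomial ℂ)) : Prop :=
  (A 0 0).degree ≤ (d : WithBot ℕ) ∧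
  (∀ j : Fin (n+1), (A 0 j.succ).degree ≤ ((d+1 : ℕ) : WithBot ℕ)) ∧
  (∀ i : Fin (n+1), (A i.succ 0).degree ≤ ((d-1 : ℕ) : WithBot ℕ)) ∧
  (∀ i j : Fin (n+1), (A i.succ j.succ).degree ≤ (d : WithBot ℕ))

/-- The group `G_r`, `r = n+2`: block form `[[1, ᵗb₁x + ᵗb₀],[0, B]]` with `B ∈ GL_{r-1}(ℂ)`. -/
def Gr (n : ℕ) (g : Matrix (Fin (n+2)) (Fin (n+2)) (Polynomial ℂ)) : Prop :=
  g 0 0 = 1 ∧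
  (∀ i : Fin (n+1), g i.succ 0 = 0) ∧
  (∀ j : Fin (n+1), (g 0 j.succ).degree ≤ 1) ∧
  (∀ i j : Fin (n+1), (g i.succ j.succ).degree ≤ 0) ∧
  IsUnit g.det

/-- The block `u(x)` of `A(x)`. -/
def blkU (n : ℕ) (A : Matrix (Fin (n+2)) (Fin (n+2)) (Polynomial ℂ)) :
    Fin (n+1) → Polynomial ℂ := fun i => A i.succ 0

/-- The block `T(x)` of `A(x)`. -/
def blkT (n : ℕ) (A : Matrix (Fin (n+2)) (Fin (n+2)) (Polynomial ℂ)) :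
    Matrix (Fin (n+1)) (Fin (n+1)) (Polynomial ℂ) := Matrix.of fun i j => A i.succ j.succ

/-- `D(A(x); x) = (u(x), T(x)u(x), …, T(x)^{r−2}u(x))`. -/
def Dmat (n : ℕ) (A : Matrix (Fin (n+2)) (Fin (n+2)) (Polynomial ℂ)) :
    Matrix (Fin (n+1)) (Fin (n+1)) (Polynomial ℂ) :=
  Matrix.of fun i j => ((blkT n A ^ (j : ℕ)) *ᵥ blkU n A) i

/-- `D(A(x); c)`, evaluation at `x = c`. -/
def Dc (n : ℕ) (A : Matrix (Fin (n+2)) (Fin (n+2)) (Polynomial ℂ)) (c : ℂ) :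
    Matrix (Fin (n+1)) (Fin (n+1)) ℂ :=
  (Dmat n A).map (eval c)

/-- The lower shift matrix `τ`. -/
def tauMat (n : ℕ) : Matrix (Fin (n+1)) (Fin (n+1)) ℂ :=
  Matrix.of fun i j => if (i : ℕ) = (j : ℕ) + 1 then 1 else 0

/-- The vector `ν = ᵗ(1,0,…,0)`. -/
def nuVec (n : ℕ) : Fin (n+1) → ℂ := fun i => if (i : ℕ) = 0 then 1 else 0


/-- Normal form conditions at `c`: `u(c) = ν`, `T(c) = τ`, and the first row of the
coefficient of `(x−c)¹` in the expansion of `T(x)` in powers of `(x−c)` vanishes. -/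
def NormalFormAt (n : ℕ) (c : ℂ)
    (S : Matrix (Fin (n+2)) (Fin (n+2)) (Polynomial ℂ)) : Prop :=
  (∀ i : Fin (n+1), eval c (blkU n S i) = nuVec n i) ∧
  ((blkT n S).map (eval c) = tauMat n) ∧
  (∀ j : Fin (n+1), eval c (derivative (blkT n S 0 j)) = 0)

namespace Polynomial

theorem eq_zero_of_degree_le_one_of_eval_derivative {R : Type*} [CommSemiring R] {p : R[X]}
    (hp : p.degree ≤ 1) {c : R} (h₀ : p.eval c = 0) (h₁ : p.derivative.eval c = 0) : p = 0 := by
  rw [eq_X_add_C_of_degree_le_one hp] at h₀ h₁ ⊢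
  simp only [derivative_add, derivative_C_mul_X, derivative_C, add_zero, eval_C] at h₁
  simp_all

end Polynomial

theorem Matrix.eq_map_C_map_eval_of_degree_le_zero {R : Type*} [CommSemiring R] {m l : Type*}
    {M : Matrix m l R[X]} (hM : ∀ i j, (M i j).degree ≤ 0) (c : R) :
    M = (M.map (eval c)).map C := by
  ext i j : 1
  obtain ⟨a, ha⟩ : ∃ a, M i j = C a := ⟨_, eq_C_of_degree_le_zero (hM i j)⟩
  simp [ha]

/-- The block `ᵗw(x)` of `A(x)`. -/
def blkW (n : ℕ) (A : Matrix (Fin (n+2)) (Fin (n+2)) (Polynomial ℂ)) :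
    Fin (n+1) → Polynomial ℂ := fun j => A 0 j.succ

section Blocks

variable {n : ℕ}

theorem blkU_mul (A B : Matrix (Fin (n+2)) (Fin (n+2)) ℂ[X]) :
    blkU n (A * B) = B 0 0 • blkU n A + blkT n A *ᵥ blkU n B := by
  ext i : 1
  simp [blkU, blkT, Matrix.mul_apply, Fin.sum_univ_succ, Matrix.mulVec, dotProduct, mul_comm]

theorem blkT_mul (A B : Matrix (Fin (n+2)) (Fin (n+2)) ℂ[X]) :
    blkT n (A * B) = vecMulVec (blkU n A) (blkW n B) + blkT n A * blkT n B := by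
  ext i j : 1
  simp [blkU, blkT, blkW, Matrix.mul_apply, Fin.sum_univ_succ, vecMulVec_apply]

theorem ext_of_blocks {A B : Matrix (Fin (n+2)) (Fin (n+2)) ℂ[X]} (h₀ : A 0 0 = B 0 0)
    (hU : blkU n A = blkU n B) (hW : blkW n A = blkW n B) (hT : blkT n A = blkT n B) :
    A = B := by
  ext i j : 1
  refine Fin.cases (Fin.cases h₀ (fun j => ?_) j) (fun i => Fin.cases ?_ (fun j => ?_) j) i
  · exact congrFun hW j
  · exact congrFun hU i
  · exact congrFun₂ hT i j

@[simp] theorem blkU_one : blkU n (1 : Matrix (Fin (n+2)) (Fin (n+2)) ℂ[X]) = 0 := by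
  ext i : 1; simp [blkU]

@[simp] theorem blkW_one : blkW n (1 : Matrix (Fin (n+2)) (Fin (n+2)) ℂ[X]) = 0 := by
  ext j : 1; simp [blkW, eq_comm]

@[simp] theorem blkT_one : blkT n (1 : Matrix (Fin (n+2)) (Fin (n+2)) ℂ[X]) = 1 := by
  ext i j : 1; simp [blkT, Matrix.one_apply]

end Blocks

section Shift

variable {n : ℕ}

theorem nuVec_eq_single : nuVec n = Pi.single 0 1 := by
  ext i; cases i using Fin.cases <;> simp [nuVec]

theorem tauMat_mul_apply_zero (B : Matrix (Fin (n+1)) (Fin (n+1)) ℂ) (j : Fin (n+1)) :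
    (tauMat n * B) 0 j = 0 := by
  simp [tauMat, Matrix.mul_apply]

theorem tauMat_mul_apply_succ (B : Matrix (Fin (n+1)) (Fin (n+1)) ℂ) (i : Fin n) (j : Fin (n+1)) :
    (tauMat n * B) i.succ j = B i.castSucc j := by
  rw [Matrix.mul_apply, Finset.sum_eq_single_of_mem i.castSucc (Finset.mem_univ _)]
  · simp [tauMat]
  · intro k _ hk
    simp only [tauMat, of_apply, Fin.val_succ, ite_mul, one_mul, zero_mul, ite_eq_right_iff]
    exact fun h => absurd (Fin.ext (by simp; omega)) hk

theorem mul_tauMat_apply_castSucc (B : Matrix (Fin (n+1)) (Fin (n+1)) ℂ) (i : Fin (n+1))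
    (j : Fin n) :
    (B * tauMat n) i j.castSucc = B i j.succ := by
  rw [Matrix.mul_apply, Finset.sum_eq_single_of_mem j.succ (Finset.mem_univ _)]
  · simp [tauMat]
  · intro k _ hk
    simp only [tauMat, of_apply, Fin.val_castSucc, mul_ite, mul_one, mul_zero, ite_eq_right_iff]
    exact fun h => absurd (Fin.ext (by simp; omega)) hk

theorem mul_tauMat_apply_last (B : Matrix (Fin (n+1)) (Fin (n+1)) ℂ) (i : Fin (n+1)) :
    (B * tauMat n) i (Fin.last n) = 0 := by
  refine (Matrix.mul_apply ..).trans (Finset.sum_eq_zero fun k _ => ?_)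
  simp only [tauMat, of_apply, Fin.val_last, mul_ite, mul_one, mul_zero, ite_eq_right_iff]
  omega

theorem eq_one_and_eq_zero_of_tauMat_commutator {B : Matrix (Fin (n+1)) (Fin (n+1)) ℂ}
    {β : Fin (n+1) → ℂ} (hν : B *ᵥ nuVec n = nuVec n)
    (h : vecMulVec (nuVec n) β + tauMat n * B = B * tauMat n) : B = 1 ∧ β = 0 := by
  have hcol (i : Fin (n+1)) : B i 0 = (1 : Matrix (Fin (n+1)) (Fin (n+1)) ℂ) i 0 := by
    simpa [nuVec_eq_single, vecMulVec_apply, mulVec_single_one, Pi.single_apply, Matrix.one_apply]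
      using congrFun hν i
  have hdiag (k m : Fin n) : B k.castSucc m.castSucc = B k.succ m.succ := by
    simpa [nuVec_eq_single, vecMulVec_apply, tauMat_mul_apply_succ, mul_tauMat_apply_castSucc]
      using congrFun₂ h k.succ m.castSucc
  have hlast (k : Fin n) : B k.castSucc (Fin.last n) = 0 := by
    simpa [nuVec_eq_single, vecMulVec_apply, tauMat_mul_apply_succ, mul_tauMat_apply_last]
      using congrFun₂ h k.succ (Fin.last n)
  have hβ (m : Fin n) : β m.castSucc = B 0 m.succ := by
    simpa [nuVec_eq_single, vecMulVec_apply, tauMat_mul_apply_zero, mul_tauMat_apply_castSucc]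
      using congrFun₂ h 0 m.castSucc
  have hβlast : β (Fin.last n) = 0 := by
    simpa [nuVec_eq_single, vecMulVec_apply, tauMat_mul_apply_zero, mul_tauMat_apply_last]
      using congrFun₂ h 0 (Fin.last n)
  have hlower (j i : Fin (n+1)) (hji : j ≤ i) :
      B i j = (1 : Matrix (Fin (n+1)) (Fin (n+1)) ℂ) i j := by
    induction j using Fin.induction generalizing i with
    | zero => exact hcol i
    | succ m ih =>
      obtain ⟨k, rfl⟩ := Fin.exists_succ_eq.mpr (ne_of_gt (lt_of_lt_of_le m.succ_pos hji))
      rw [← hdiag, ih _ (by simpa using hji)]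
      simp [Matrix.one_apply]
  have hupper (j i : Fin (n+1)) (hij : i < j) : B i j = 0 := by
    induction j using Fin.reverseInduction generalizing i with
    | last =>
      obtain ⟨k, rfl⟩ := Fin.exists_castSucc_eq.mpr (ne_of_lt hij)
      exact hlast k
    | cast m ih =>
      obtain ⟨k, rfl⟩ := Fin.exists_castSucc_eq.mpr (ne_of_lt (hij.trans (Fin.castSucc_lt_last m)))
      rw [hdiag]
      exact ih _ (by simpa using hij)
  refine ⟨Matrix.ext fun i j => ?_, funext fun j => ?_⟩
  · rcases le_or_gt j i with hji | hij
    · exact hlower j i hji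
    · rw [hupper j i hij, Matrix.one_apply_ne hij.ne]
  · induction j using Fin.lastCases with
    | last => exact hβlast
    | cast m => exact (hβ m).trans (hupper _ _ m.succ_pos)

end Shift

section Conjugation

variable {n : ℕ} {c : ℂ} {S S' : Matrix (Fin (n+2)) (Fin (n+2)) ℂ[X]}

theorem blkU_eq_mulVec_of_mul_eq_mul {g : Matrix (Fin (n+2)) (Fin (n+2)) ℂ[X]} (h₀ : g 0 0 = 1)
    (hU : blkU n g = 0) (h : S * g = g * S') : blkU n S = blkT n g *ᵥ blkU n S' := by
  simpa [blkU_mul, h₀, hU] using congrArg (blkU n) h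

theorem blkT_eq_of_mul_eq_mul {g : Matrix (Fin (n+2)) (Fin (n+2)) ℂ[X]}
    (hU : blkU n g = 0) (h : S * g = g * S') :
    vecMulVec (blkU n S) (blkW n g) + blkT n S * blkT n g = blkT n g * blkT n S' := by
  simpa [blkT_mul, hU] using congrArg (blkT n) h

theorem NormalFormAt.eval_intertwining (hS : NormalFormAt n c S) (hS' : NormalFormAt n c S')
    {G : Matrix (Fin (n+1)) (Fin (n+1)) ℂ[X]} {w : Fin (n+1) → ℂ[X]}
    (hU : blkU n S = G *ᵥ blkU n S') (hT : vecMulVec (blkU n S) w + blkT n S * G = G * blkT n S') :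
    G.map (eval c) *ᵥ nuVec n = nuVec n ∧
      vecMulVec (nuVec n) (eval c ∘ w) + tauMat n * G.map (eval c) = G.map (eval c) * tauMat n := by
  have hSu' : eval c ∘ blkU n S' = nuVec n := funext hS'.1
  constructor
  · ext i
    have := RingHom.map_mulVec (evalRingHom c) G (blkU n S') i
    rw [coe_evalRingHom, hSu'] at this
    rw [← this, ← hU]
    exact hS.1 i
  · have := congrArg (evalRingHom c).mapMatrix hT
    rw [map_add, map_mul, map_mul] at this
    simp only [RingHom.mapMatrix_apply, coe_evalRingHom, hS.2.1, hS'.2.1] at this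
    rw [← this]
    congr 1
    ext i j : 1
    simp [vecMulVec_apply, hS.1 i]

theorem NormalFormAt.eval_derivative_eq_zero (hS : NormalFormAt n c S) (hS' : NormalFormAt n c S')
    {w : Fin (n+1) → ℂ[X]} (hT : vecMulVec (blkU n S) w + blkT n S = blkT n S') (j : Fin (n+1))
    (hw : eval c (w j) = 0) : eval c (derivative (w j)) = 0 := by
  have := congrArg (fun p => eval c (derivative p)) (congrFun₂ hT 0 j)
  simpa [vecMulVec_apply, hw, hS.1 0, nuVec, hS.2.2 j, hS'.2.2 j] using this

end Conjugation

theorem stmt1_general (n : ℕ) (c : ℂ)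
    (S S' : Matrix (Fin (n+2)) (Fin (n+2)) (Polynomial ℂ))
    (hnf : NormalFormAt n c S) (hnf' : NormalFormAt n c S')
    (g : Matrix (Fin (n+2)) (Fin (n+2)) (Polynomial ℂ)) (hg : Gr n g)
    (hconj : g⁻¹ * S * g = S') :
    g = 1 ∧ S = S' := by
  obtain ⟨hg₀, hgU, hgW, hgT, hdet⟩ := hg
  have hcomm : S * g = g * S' := by
    rw [← hconj, ← Matrix.mul_assoc, ← Matrix.mul_assoc, mul_nonsing_inv _ hdet, Matrix.one_mul]
  have hgU0 : blkU n g = 0 := funext hgU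
  have hT := blkT_eq_of_mul_eq_mul hgU0 hcomm
  obtain ⟨hν, hτ⟩ :=
    hnf.eval_intertwining hnf' (blkU_eq_mulVec_of_mul_eq_mul hg₀ hgU0 hcomm) hT
  obtain ⟨hB, hWc⟩ := eq_one_and_eq_zero_of_tauMat_commutator hν hτ
  have hgT1 : blkT n g = 1 := by
    rw [Matrix.eq_map_C_map_eval_of_degree_le_zero (M := blkT n g) hgT c, hB,
      Matrix.map_one _ C_0 C_1]
  rw [hgT1, mul_one, one_mul] at hT
  have hgW0 : blkW n g = 0 := funext fun j =>
    eq_zero_of_degree_le_one_of_eval_derivative (hgW j) (congrFun hWc j)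
      (hnf.eval_derivative_eq_zero hnf' hT j (congrFun hWc j))
  obtain rfl : g = 1 :=
    ext_of_blocks (by simp [hg₀]) (by simp [hgU0]) (by simp [hgW0]) (by simp [hgT1])
  simpa using hconj

/-- if two matrices in normal form at `c` are conjugate under `G_r`,
then the conjugating element is the identity. -/
theorem stmt1 (n d : ℕ) (hd : 1 ≤ d) (c : ℂ)
    (S S' : Matrix (Fin (n+2)) (Fin (n+2)) (Polynomial ℂ))
    (hS : Mrd n d S) (hS' : Mrd n d S')
    (hnf : NormalFormAt n c S) (hnf' : NormalFormAt n c S')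
    (g : Matrix (Fin (n+2)) (Fin (n+2)) (Polynomial ℂ)) (hg : Gr n g)
    (hconj : g⁻¹ * S * g = S') :
    g = 1 ∧ S = S' :=
  stmt1_general n c S S' hnf hnf' g hg hconj
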